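/- For any probability measure Q over X × Y, μ > 0, and scoring functions f, f* : X → (Y → ℝ), the target zero-one error satisfies L_Q(h_f) ≤ E_Q[W_μ(ω_{f*}(x, h_f(x)))] + L^μ_Q(f*), where L_Q(h_f) = E_{(x,y)∼Q} 𝟙[h_f(x) ≠ y] and L^μ_Q(f*) = E_{(x,y)∼Q}[W_μ(ω_{f*}(x,y))]. -/

import Mathlib

open MeasureTheory

/-- The ramp loss `W_μ`. -/
noncomputable def ramp (μ v : ℝ) : ℝ :=
  if μ ≤ v then 0 else if v ≤ 0 then 1 else 1 - v / μ

/-- The margin `ω_f(x,y) = (f(x)(y) - max_{y' ≠ y} f(x)(y'))/2` of a scoring function. -/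
noncomputable def margin {X Y : Type*} [Fintype Y] [DecidableEq Y] [Nontrivial Y]
    (f : X → Y → ℝ) (x : X) (y : Y) : ℝ :=
  (f x y - (Finset.univ.erase y).sup'
      (by obtain ⟨b, hb⟩ := exists_ne y
          exact ⟨b, Finset.mem_erase.mpr ⟨hb, Finset.mem_univ b⟩⟩) (f x)) / 2

/-! The pointwise bound `𝟙[a ≠ b] ≤ W_μ(ω(a)) + W_μ(ω(b))` holds because two distinct labels
cannot both have positive margin, and `W_μ = 1` on nonpositive margins. Integrating it gives the
theorem. -/

lemma ramp_nonneg (μ v : ℝ) : 0 ≤ ramp μ v := by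
  unfold ramp
  split_ifs with hμv hv
  · rfl
  · exact zero_le_one
  · rw [not_le] at hμv hv
    rw [sub_nonneg, div_le_one (hv.trans hμv)]
    exact hμv.le

lemma ramp_of_nonpos {μ v : ℝ} (hμ : 0 < μ) (hv : v ≤ 0) : ramp μ v = 1 := by
  rw [ramp, if_neg (by linarith), if_pos hv]

section Margin

variable {X Y : Type*} [Fintype Y] [DecidableEq Y] [Nontrivial Y]

/-- Each margin is at most half the gap `g x a - g x b`, and the two gaps cancel. -/
lemma margin_add_margin_nonpos (g : X → Y → ℝ) (x : X) {a b : Y} (hab : a ≠ b) :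
    margin g x a + margin g x b ≤ 0 := by
  have hba : g x b ≤ (Finset.univ.erase a).sup' ⟨b, by simp [hab.symm]⟩ (g x) :=
    Finset.le_sup' (g x) (by simp [hab.symm])
  have hab' : g x a ≤ (Finset.univ.erase b).sup' ⟨a, by simp [hab]⟩ (g x) :=
    Finset.le_sup' (g x) (by simp [hab])
  unfold margin
  linarith

lemma indicator_ne_le_ramp_margin_add (g : X → Y → ℝ) (x : X) {μ : ℝ} (hμ : 0 < μ) (a b : Y) :
    (if a ≠ b then (1 : ℝ) else 0) ≤ ramp μ (margin g x a) + ramp μ (margin g x b) := by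
  have ha := ramp_nonneg μ (margin g x a)
  have hb := ramp_nonneg μ (margin g x b)
  split_ifs with hab
  · rcases le_or_gt (margin g x a) 0 with hma | hma
    · rw [ramp_of_nonpos hμ hma]; linarith
    · have hmb : margin g x b ≤ 0 := by linarith [margin_add_margin_nonpos g x hab]
      rw [ramp_of_nonpos hμ hmb]; linarith
  · linarith

end Margin

theorem zero_one_error_le_general {X Y : Type*} [MeasurableSpace X] [MeasurableSpace Y]
    [Fintype Y] [DecidableEq Y] [Nontrivial Y]
    (Q : Measure (X × Y))
    (μ : ℝ) (hμ : 0 < μ) (fstar : X → Y → ℝ) (hf : X → Y)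
    (h2 : Integrable (fun z : X × Y => ramp μ (margin fstar z.1 (hf z.1))) Q)
    (h3 : Integrable (fun z : X × Y => ramp μ (margin fstar z.1 z.2)) Q) :
    (∫ z, (if hf z.1 ≠ z.2 then (1 : ℝ) else 0) ∂Q)
      ≤ (∫ z, ramp μ (margin fstar z.1 (hf z.1)) ∂Q)
        + ∫ z, ramp μ (margin fstar z.1 z.2) ∂Q := by
  rw [← integral_add h2 h3]
  refine integral_mono_of_nonneg (.of_forall fun z => ?_) (h2.add h3)
    (.of_forall fun z => indicator_ne_le_ramp_margin_add fstar z.1 hμ (hf z.1) z.2)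
  dsimp only [Pi.zero_apply]
  split_ifs <;> norm_num

/-- Target zero-one error bound:
`L_Q(h_f) ≤ E_Q[W_μ(ω_{f*}(x, h_f(x)))] + L^μ_Q(f*)`. -/
theorem zero_one_error_le {X Y : Type*} [MeasurableSpace X] [MeasurableSpace Y]
    [Fintype Y] [DecidableEq Y] [Nontrivial Y]
    (Q : Measure (X × Y)) [IsProbabilityMeasure Q]
    (μ : ℝ) (hμ : 0 < μ) (f fstar : X → Y → ℝ) (hf : X → Y)
    (hargmax : ∀ x y, f x y ≤ f x (hf x))
    (h1 : Integrable (fun z : X × Y => if hf z.1 ≠ z.2 then (1 : ℝ) else 0) Q)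
    (h2 : Integrable (fun z : X × Y => ramp μ (margin fstar z.1 (hf z.1))) Q)
    (h3 : Integrable (fun z : X × Y => ramp μ (margin fstar z.1 z.2)) Q) :
    (∫ z, (if hf z.1 ≠ z.2 then (1 : ℝ) else 0) ∂Q)
      ≤ (∫ z, ramp μ (margin fstar z.1 (hf z.1)) ∂Q)
        + ∫ z, ramp μ (margin fstar z.1 z.2) ∂Q :=
  zero_one_error_le_general Q μ hμ fstar hf h2 h3
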